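/- Let A be a meet-semilattice and κ an infinite regular cardinal. Then BL_κ(DM A) = {↓a : a ∈ A} (the sub-κ-frame of BL A generated by the normal ideals of A consists exactly of the principal D-ideals) if and only if A is a complete lattice and a κ-frame. -/
import Mathlib


open Cardinal

section Defs

variable {A : Type*} [SemilatticeInf A]

/-- `S ⊆ A` is admissible, with distributive join `x`: the join of `S` is `x` and
for every `a`, `a ⊓ x` is the join of `{a ⊓ s : s ∈ S}`. -/
def IsDistJoin (S : Set A) (x : A) : Prop :=
  IsLUB S x ∧ ∀ a : A, IsLUB ((fun s => a ⊓ s) '' S) (a ⊓ x)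

/-- A D-ideal of the meet-semilattice `A`: a downset closed under joins of
admissible subsets. -/
def IsDIdeal (E : Set A) : Prop :=
  IsLowerSet E ∧ ∀ S : Set A, S ⊆ E → ∀ x : A, IsDistJoin S x → x ∈ E

/-- `J` is the join of the family `T` in the Bruns–Lakser completion `BL A`:
the least D-ideal containing `⋃₀ T`. -/
def IsBLJoin (T : Set (Set A)) (J : Set A) : Prop :=
  IsDIdeal J ∧ ⋃₀ T ⊆ J ∧ ∀ E : Set A, IsDIdeal E → ⋃₀ T ⊆ E → J ⊆ E

/-- A family of D-ideals closed under finite meets (intersections, including the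
top `Set.univ` of `BL A`) and under κ-joins computed in `BL A`. -/
def BLClosed (κ : Cardinal) (C : Set (Set A)) : Prop :=
  Set.univ ∈ C ∧ (∀ E ∈ C, ∀ F ∈ C, E ∩ F ∈ C) ∧
    ∀ T : Set (Set A), T ⊆ C → #T < κ → ∀ J : Set A, IsBLJoin T J → J ∈ C

/-- The sub-κ-frame of `BL A` generated by `G`: the smallest subset of `BL A`
containing `G` and closed under finite meets and κ-joins computed in `BL A`. -/
def BLKappa (κ : Cardinal) (G : Set (Set A)) : Set (Set A) :=
  ⋂₀ {C : Set (Set A) | G ⊆ C ∧ C ⊆ {E : Set A | IsDIdeal E} ∧ BLClosed κ C}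

/-- A normal ideal: a downset `N` with `N = Nᵘˡ`. -/
def IsNormalIdeal (N : Set A) : Prop :=
  IsLowerSet N ∧ N = lowerBounds (upperBounds N)

/-- The relative annihilator `⟨a,b⟩ = {x : a ⊓ x ≤ b}`. -/
def RelAnn (a b : A) : Set A := {x : A | a ⊓ x ≤ b}

end Defs

/-- κ-completeness: every κ-join exists. -/
def IsKappaComplete (A : Type*) [Preorder A] (κ : Cardinal) : Prop :=
  ∀ S : Set A, #S < κ → ∃ x : A, IsLUB S x

/-- κJD: every existing κ-join is a distributive join. -/
def IsKappaJD (A : Type*) [SemilatticeInf A] (κ : Cardinal) : Prop :=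
  ∀ S : Set A, #S < κ → ∀ x : A, IsLUB S x → IsDistJoin S x

/-- A κ-frame: a κ-complete and κJD meet-semilattice. -/
def IsKappaFrame (A : Type*) [SemilatticeInf A] (κ : Cardinal) : Prop :=
  IsKappaComplete A κ ∧ IsKappaJD A κ

section Aux

variable {A : Type*} [SemilatticeInf A]

lemma iic_isDIdeal (a : A) : IsDIdeal (Set.Iic a) :=
  ⟨fun _ _ h hx => h.trans hx, fun S hS x hx => hx.1.2 fun _ hs => hS hs⟩

lemma iic_isNormal (a : A) : IsNormalIdeal (Set.Iic a) := by
  refine ⟨fun _ _ h hx => h.trans hx, ?_⟩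
  rw [upperBounds_Iic, lowerBounds_Ici]

lemma normal_isDIdeal {N : Set A} (hN : IsNormalIdeal N) : IsDIdeal N := by
  refine ⟨hN.1, fun S hS x hx => ?_⟩
  rw [hN.2]
  exact fun u hu => hx.1.2 fun s hs => hu (hS hs)

lemma relAnn_isDIdeal (a b : A) : IsDIdeal (RelAnn a b) := by
  refine ⟨fun x y h hx => le_trans (inf_le_inf_left a h) hx, ?_⟩
  intro S hS x hx
  exact (hx.2 a).2 (by rintro z ⟨s, hs, rfl⟩; exact hS hs)

lemma univ_isDIdeal : IsDIdeal (Set.univ : Set A) :=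
  ⟨fun _ _ _ _ => trivial, fun _ _ _ _ => trivial⟩

lemma inter_isDIdeal {E F : Set A} (hE : IsDIdeal E) (hF : IsDIdeal F) :
    IsDIdeal (E ∩ F) :=
  ⟨fun x y h hx => ⟨hE.1 h hx.1, hF.1 h hx.2⟩,
   fun S hS x hx => ⟨hE.2 S (fun s hs => (hS hs).1) x hx,
     hF.2 S (fun s hs => (hS hs).2) x hx⟩⟩

lemma exists_blJoin (T : Set (Set A)) :
    IsBLJoin T (⋂₀ {E : Set A | IsDIdeal E ∧ ⋃₀ T ⊆ E}) := by
  refine ⟨⟨?_, ?_⟩, ?_, ?_⟩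
  · intro x y h hx
    exact fun E hE => hE.1.1 h (hx E hE)
  · intro S hS x hx E hE
    exact hE.1.2 S (fun s hs => hS hs E hE) x hx
  · intro x hx E hE
    exact hE.2 hx
  · intro E hE hTE
    exact Set.sInter_subset_of_mem ⟨hE, hTE⟩

lemma blJoin_unique {T : Set (Set A)} {J J' : Set A}
    (h : IsBLJoin T J) (h' : IsBLJoin T J') : J = J' :=
  Set.Subset.antisymm (h.2.2 _ h'.1 h'.2.1) (h'.2.2 _ h.1 h.2.1)

lemma subset_blKappa {κ : Cardinal} {G : Set (Set A)} : G ⊆ BLKappa κ G :=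
  fun _ hg _ hC => hC.1 hg

lemma blKappa_closed {κ : Cardinal} {G : Set (Set A)} : BLClosed κ (BLKappa κ G) := by
  refine ⟨?_, ?_, ?_⟩
  · exact fun C hC => hC.2.2.1
  · exact fun E hE F hF C hC => hC.2.2.2.1 E (hE C hC) F (hF C hC)
  · exact fun T hT hTκ J hJ C hC =>
      hC.2.2.2.2 T (fun t ht => hT ht C hC) hTκ J hJ

end Aux

/-- A family of subsets of `α` closed under binary intersections is a
meet-semilattice in the inherited (inclusion) order, meets being intersections. -/

def subSemilatticeInf {α : Type*} (B : Set (Set α))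
    (hmeet : ∀ E ∈ B, ∀ F ∈ B, E ∩ F ∈ B) : SemilatticeInf ↥B :=
  { (inferInstance : PartialOrder ↥B) with
    inf := fun E F => ⟨E.1 ∩ F.1, hmeet _ E.2 _ F.2⟩
    inf_le_left := fun _ _ _ hx => hx.1
    inf_le_right := fun _ _ _ hx => hx.2
    le_inf := fun _ _ _ h1 h2 _ hx => ⟨h1 hx, h2 hx⟩ }

/-- For a meet-semilattice `A` and an infinite regular cardinal `κ`:
the sub-κ-frame of `BL A` generated by the normal ideals of `A` consists exactly of
the principal D-ideals, `BL_κ(DM A) = {↓a : a ∈ A}`, iff `A` is a complete lattice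
(every subset has a least upper bound) and a κ-frame. -/
theorem BLKappaDM_eq_principal_iff (A : Type*) [SemilatticeInf A] [OrderTop A]
    (κ : Cardinal) (hκ : κ.IsRegular) :
    BLKappa κ {N : Set A | IsNormalIdeal N} = Set.range (Set.Iic : A → Set A) ↔
      ((∀ S : Set A, ∃ x : A, IsLUB S x) ∧ IsKappaFrame A κ) := by
  constructor
  · -- forward direction
    intro h
    have hcomp : ∀ S : Set A, ∃ x : A, IsLUB S x := by
      intro S
      set N : Set A := lowerBounds (upperBounds S) with hNdef
      have hub : upperBounds N = upperBounds S := by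
        apply Set.Subset.antisymm
        · intro u hu s hs
          exact hu (fun v hv => hv hs)
        · intro u hu x hx
          exact hx hu
      have hN : IsNormalIdeal N := by
        refine ⟨fun x y hyx hx u hu => hyx.trans (hx hu), ?_⟩
        rw [hub]
      have hNr : N ∈ Set.range (Set.Iic : A → Set A) := h ▸ subset_blKappa hN
      obtain ⟨a, ha⟩ := hNr
      refine ⟨a, ?_, ?_⟩
      · intro s hs
        have : s ∈ N := fun u hu => hu hs
        rw [← ha] at this
        exact this
      · intro u hu
        have : a ∈ N := ha ▸ Set.mem_Iic.mpr le_rfl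
        exact this hu
    have hkey : ∀ S : Set A, #S < κ → ∀ x : A, IsLUB S x →
        ∀ E : Set A, IsDIdeal E → S ⊆ E → x ∈ E := by
      intro S hS x hx E hE hSE
      set T : Set (Set A) := Set.Iic '' S with hT
      have hJ := exists_blJoin T
      have hJmem : (⋂₀ {E : Set A | IsDIdeal E ∧ ⋃₀ T ⊆ E})
          ∈ BLKappa κ {N : Set A | IsNormalIdeal N} := by
        refine blKappa_closed.2.2 T ?_ ?_ _ hJ
        · rintro _ ⟨s, hs, rfl⟩
          exact subset_blKappa (iic_isNormal s)
        · exact (Cardinal.mk_image_le).trans_lt hS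
      rw [h] at hJmem
      obtain ⟨b, hb⟩ := hJmem
      have hsub : Set.Iic b ⊆ E := by
        rw [hb]
        refine hJ.2.2 E hE ?_
        rintro z ⟨_, ⟨s, hs, rfl⟩, hz⟩
        exact hE.1 hz (hSE hs)
      have hxb : x ≤ b := by
        refine hx.2 fun s hs => ?_
        have : s ∈ Set.Iic b := hb ▸ hJ.2.1 ⟨Set.Iic s, ⟨s, hs, rfl⟩, le_rfl⟩
        exact this
      exact hsub hxb
    refine ⟨hcomp, fun S hS => hcomp S, ?_⟩
    intro S hS x hx
    refine ⟨hx, fun a => ⟨?_, ?_⟩⟩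
    · rintro z ⟨s, hs, rfl⟩
      exact inf_le_inf_left a (hx.1 hs)
    · intro y hy
      exact hkey S hS x hx (RelAnn a y) (relAnn_isDIdeal a y)
        (fun s hs => hy ⟨s, hs, rfl⟩)
  · -- backward direction
    rintro ⟨hcomp, hκc, hκd⟩
    apply Set.Subset.antisymm
    · apply Set.sInter_subset_of_mem
      refine ⟨?_, ?_, ?_, ?_, ?_⟩
      · -- normal ideals are principal
        intro N hN
        obtain ⟨x, hx⟩ := hcomp N
        refine ⟨x, ?_⟩
        rw [hN.2]
        have hub : upperBounds N = Set.Ici x := by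
          apply Set.Subset.antisymm
          · exact fun u hu => hx.2 hu
          · exact fun u hu s hs => (hx.1 hs).trans hu
        rw [hub, lowerBounds_Ici]
      · rintro _ ⟨a, rfl⟩
        exact iic_isDIdeal a
      · exact ⟨⊤, Set.Iic_top⟩
      · rintro _ ⟨a, rfl⟩ _ ⟨b, rfl⟩
        exact ⟨a ⊓ b, Set.Iic_inter_Iic.symm⟩
      · intro T hT hTκ J hJ
        set S : Set A := {a : A | Set.Iic a ∈ T} with hSdef
        have hST : #S ≤ #T := by
          refine Cardinal.mk_le_of_injective (f := fun a : S => (⟨Set.Iic a.1, a.2⟩ : T)) ?_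
          intro a b hab
          exact Subtype.ext (Set.Iic_injective (congrArg Subtype.val hab))
        obtain ⟨x, hx⟩ := hcomp S
        have hd := hκd S (hST.trans_lt hTκ) x hx
        have hBL : IsBLJoin T (Set.Iic x) := by
          refine ⟨iic_isDIdeal x, ?_, ?_⟩
          · rintro z ⟨t, ht, hz⟩
            obtain ⟨a, rfl⟩ := hT ht
            exact le_trans hz (hx.1 ht)
          · intro E hE hTE z hz
            have hxE : x ∈ E :=
              hE.2 S (fun a ha => hTE ⟨Set.Iic a, ha, le_rfl⟩) x hd
            exact hE.1 hz hxE
        rw [blJoin_unique hJ hBL]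
        exact ⟨x, rfl⟩
    · rintro _ ⟨a, rfl⟩
      exact subset_blKappa (iic_isNormal a)
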